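/- arXiv:2004.01450 — 6 statements merged into one kernel-verified Lean document; each statement's English description precedes it below -/
import Mathlib

section
/- For every n ≥ 4 the map η_n : S_n → Aut(V^n) is a group homomorphism, i.e. η_n(π'π) = η_n(π') ∘ η_n(π) for all π, π' ∈ S_n. -/
open Equiv

/-- XOR on `Fin 4` (the Klein group structure on vertices of a tetrahedron). -/
def xor4 (a b : Fin 4) : Fin 4 :=
  ⟨(a.val ^^^ b.val) % 4, Nat.mod_lt _ (by norm_num)⟩

/-- The underlying function of the cross-ratio homomorphism `φ : S₄ → S₃`:
a permutation of the vertices `{0,1,2,3}` of a tetrahedron induces a permutation of the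
three partitions of the vertex set into two pairs of opposite edges; the partition pairing
`0` with `j+1` is indexed by `j : Fin 3`. -/
def phiFun (π : Perm (Fin 4)) (j : Fin 3) : Fin 3 :=
  ⟨(xor4 (π 0) (π ⟨j.val + 1, by omega⟩)).val - 1, by
    have h := (xor4 (π 0) (π ⟨j.val + 1, by omega⟩)).isLt
    omega⟩

lemma phiFun_leftInv : ∀ (π : Perm (Fin 4)) (j : Fin 3), phiFun π⁻¹ (phiFun π j) = j := by
  decide

/-- The cross-ratio homomorphism `φ : S₄ → S₃`. -/
def phi (π : Perm (Fin 4)) : Perm (Fin 3) where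
  toFun := phiFun π
  invFun := phiFun π⁻¹
  left_inv := phiFun_leftInv π
  right_inv := fun j => by simpa using phiFun_leftInv π⁻¹ j

/-- Restriction of a permutation `π` to a bijection between the complement of `{i}`
and the complement of `{π i}`. -/
def restrictPerm {k : ℕ} (π : Perm (Fin k)) (i : Fin k) :
    {x : Fin k // x ≠ i} ≃ {x : Fin k // x ≠ π i} where
  toFun x := ⟨π x.1, fun h => x.2 (π.injective h)⟩
  invFun y := ⟨π.symm y.1, fun h => y.2 (by simpa using congrArg π h)⟩
  left_inv x := Subtype.ext (π.symm_apply_apply x.1)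
  right_inv y := Subtype.ext (π.apply_symm_apply y.1)

/-- The induced permutation `π_i ∈ S_k` of `π ∈ S_{k+1}`: the restriction of `π` to the
complement of `{i}`, reindexed via the order preserving identifications with `Fin k`. -/
def inducedPerm {k : ℕ} (π : Perm (Fin (k + 1))) (i : Fin (k + 1)) : Perm (Fin k) :=
  ((finSuccAboveEquiv i).trans ((restrictPerm π i).trans (finSuccAboveEquiv (π i)).symm))

/-- The spaces `V^n` of the paper, reindexed: `Vs k` models `V^{k+4}`.
`V^4 = ℝ³` and `V^{n+1} = ℝ^{n+1} ⊗ V^n`, a tensor being viewed as an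
`(n+1)`-tuple of rows lying in `V^n`. -/
def Vs : ℕ → Type
  | 0 => Fin 3 → ℝ
  | (k + 1) => Fin (k + 5) → Vs k

/-- The canonical action `η_n` of `S_n` on `V^n` (with `n = k + 4`):
`η₄(π)(e_j) = sign(π) e_{φ(π) j}` and `η_{n+1}(π)(e_i ⊗ u) = e_{π(i)} ⊗ η_n(π_i)(u)`. -/
noncomputable def eta : (k : ℕ) → Equiv.Perm (Fin (k + 4)) → Vs k → Vs k
  | 0 => fun π v j => ((Equiv.Perm.sign π : ℤ) : ℝ) * v ((phi π)⁻¹ j)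
  | (k + 1) => fun π v i => eta k (inducedPerm π (π⁻¹ i)) (v (π⁻¹ i))

/-!
Two facts make `η` multiplicative. On `V⁴`, both `sign` and the cross-ratio map `φ` are
homomorphisms; the latter is a finite check over `S₄ × S₄`. In the inductive step, the
induced permutations satisfy the cocycle rule `(π' π)_i = π'_{π i} π_i`, so
`η_{n+1}(π') η_{n+1}(π)` sends `e_i ⊗ u` to `e_{π' π i} ⊗ η_n(π'_{π i}) η_n(π_i) u`, which
is `η_{n+1}(π' π)(e_i ⊗ u)` by induction.
-/

theorem phi_mul (π π' : Perm (Fin 4)) : phi (π' * π) = phi π' * phi π := by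
  revert π π'
  decide

theorem inducedPerm_mul {k : ℕ} (π π' : Perm (Fin (k + 1))) (i : Fin (k + 1)) :
    inducedPerm (π' * π) i = inducedPerm π' (π i) * inducedPerm π i := by
  ext x
  simp [inducedPerm, restrictPerm, Perm.mul_apply]

theorem eta_zero_mul (π π' : Perm (Fin 4)) : eta 0 (π' * π) = eta 0 π' ∘ eta 0 π := by
  funext v j
  rw [Function.comp_apply]
  simp only [eta, phi_mul, mul_inv_rev, Perm.mul_apply, map_mul,
    Units.val_mul, Int.cast_mul]
  ring

theorem eta_succ_mul {k : ℕ}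
    (ih : ∀ π π' : Perm (Fin (k + 4)), eta k (π' * π) = eta k π' ∘ eta k π)
    (π π' : Perm (Fin (k + 5))) : eta (k + 1) (π' * π) = eta (k + 1) π' ∘ eta (k + 1) π := by
  funext v i
  have hinduced : inducedPerm (π' * π) (π⁻¹ (π'⁻¹ i)) =
      inducedPerm π' (π'⁻¹ i) * inducedPerm π (π⁻¹ (π'⁻¹ i)) := by
    simpa using inducedPerm_mul π π' (π⁻¹ (π'⁻¹ i))
  rw [Function.comp_apply]
  simp only [eta, mul_inv_rev, Perm.mul_apply, hinduced, ih, Function.comp_apply]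

theorem eta_mul (k : ℕ) (π π' : Equiv.Perm (Fin (k + 4))) :
    eta k (π' * π) = (eta k π') ∘ (eta k π) := by
  induction k with
  | zero => exact eta_zero_mul π π'
  | succ k ih => exact eta_succ_mul ih π π'
end

section
/- For every n ≥ 5 the canonical representation η_n : S_n → Aut(V^n) is injective: if η_n(π) = id then π = id. -/
/- Each `η_n(π)` is injective, being a signed permutation of coordinates at the bottom level and
a block permutation with injective blocks above it. Since `η_{n+1}(π)` sends block `i` of a vector
to block `π i` through `η_n(π_i)`, if `π i ≠ i` then two vectors differing only in block `i` have
images differing in block `π i`, so `η_{n+1}(π)` cannot be the identity. -/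

open Equiv

instance Vs.instNontrivial : (k : ℕ) → Nontrivial (Vs k)
  | 0 => inferInstanceAs (Nontrivial (Fin 3 → ℝ))
  | k + 1 =>
    haveI := Vs.instNontrivial k
    inferInstanceAs (Nontrivial (Fin (k + 5) → Vs k))

theorem eta_succ_apply_apply (k : ℕ) (π : Perm (Fin (k + 5))) (v : Vs (k + 1)) (i : Fin (k + 5)) :
    eta (k + 1) π v (π i) = eta k (inducedPerm π i) (v i) := by
  simp only [eta, Perm.coe_inv, symm_apply_apply]

theorem eta_apply_injective (k : ℕ) (π : Perm (Fin (k + 4))) : Function.Injective (eta k π) := by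
  induction k with
  | zero =>
    intro v w hvw
    funext j
    have hj := congrFun hvw (phi π j)
    simp only [eta, Perm.coe_inv, symm_apply_apply] at hj
    exact mul_left_cancel₀ (by simp) hj
  | succ k ih =>
    intro v w hvw
    funext i
    have hi := congrFun hvw (π i)
    rw [eta_succ_apply_apply, eta_succ_apply_apply] at hi
    exact ih _ hi

/-- For every `n ≥ 5` (here `n = k + 5`) the canonical representation `η_n` is injective. -/
theorem eta_injective (k : ℕ) (π : Equiv.Perm (Fin (k + 5)))
    (h : eta (k + 1) π = id) : π = 1 := by
  refine Equiv.ext fun i => ?_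
  by_contra hπi
  rw [Perm.one_apply] at hπi
  obtain ⟨a, b, hab⟩ := exists_pair_ne (Vs k)
  have hfix (v : Vs (k + 1)) : eta k (inducedPerm π i) (v i) = v (π i) := by
    rw [← eta_succ_apply_apply, h, id]
  have ha := hfix fun _ => a
  have hb := hfix (Function.update (fun _ => a) i b)
  rw [Function.update_self, Function.update_of_ne hπi] at hb
  exact hab (eta_apply_injective k _ (ha.trans hb.symm))
end

section
/- The subspace L_5 ⊂ V^5, consisting of those 5×3 real matrices each of whose rows (a_i, b_i, c_i) satisfies a_i + b_i + c_i = 0, is invariant under the canonical representation η_5 of S_5 on V^5. -/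
open Equiv

/-- `η₄ : S₄ → Aut(V⁴)`, `V⁴ = ℝ³`: the signed cross-ratio representation,
`η₄(π)(e_j) = sign(π) e_{φ(π) j}`. -/
noncomputable def eta4fun (π : Equiv.Perm (Fin 4)) (v : Fin 3 → ℝ) : Fin 3 → ℝ :=
  fun j => ((Equiv.Perm.sign π : ℤ) : ℝ) * v ((phi π)⁻¹ j)

/-- The canonical representation `η₅ : S₅ → Aut(V⁵)` on the space `V⁵` of `5 × 3`
real matrices: `η₅(π)(e_i ⊗ u) = e_{π(i)} ⊗ η₄(π_i)(u)`. -/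
noncomputable def eta5fun (π : Equiv.Perm (Fin 5)) (v : Fin 5 → Fin 3 → ℝ) :
    Fin 5 → Fin 3 → ℝ :=
  fun i => eta4fun (inducedPerm π (π⁻¹ i)) (v (π⁻¹ i))

/-- `η₅(π)` as a linear endomorphism of `V⁵`. -/
noncomputable def eta5lin (π : Equiv.Perm (Fin 5)) :
    (Fin 5 → Fin 3 → ℝ) →ₗ[ℝ] (Fin 5 → Fin 3 → ℝ) where
  toFun := eta5fun π
  map_add' := by
    intro v w; funext i j; simp [eta5fun, eta4fun, mul_add]
  map_smul' := by
    intro c v; funext i j; simp [eta5fun, eta4fun, smul_eq_mul]; ring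

/-- The subspace `L₅ ⊂ V⁵` of matrices whose rows sum to zero. -/
def L5set : Set (Fin 5 → Fin 3 → ℝ) := {v | ∀ i, v i 0 + v i 1 + v i 2 = 0}

lemma mem_L5set_iff {v : Fin 5 → Fin 3 → ℝ} : v ∈ L5set ↔ ∀ i, ∑ j, v i j = 0 := by
  simp only [L5set, Set.mem_ofPred_eq, Fin.sum_univ_three]

lemma sum_eta4fun (π : Perm (Fin 4)) (u : Fin 3 → ℝ) :
    ∑ j, eta4fun π u j = (Perm.sign π : ℤ) * ∑ j, u j := by
  simp only [eta4fun, ← Finset.mul_sum]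
  rw [Equiv.sum_comp]

/-- `L₅` is invariant under the canonical representation `η₅`. -/
theorem L5set_invariant (π : Equiv.Perm (Fin 5)) (v : Fin 5 → Fin 3 → ℝ)
    (hv : v ∈ L5set) : eta5fun π v ∈ L5set := by
  rw [mem_L5set_iff] at hv ⊢
  intro i
  rw [eta5fun, sum_eta4fun, hv, mul_zero]
end

section
/- Let ψ(π) = Tr(η_5(π)) be the character of the canonical representation η_5 of S_5 on V^5. Then ψ takes the following values on the conjugacy classes of S_5: ψ = 15 on the identity (class 1⁵), ψ = −3 on transpositions (class 21³), ψ = 3 on products of two disjoint transpositions (class 2²1), ψ = 0 on 3-cycles (class 31²), ψ = 0 on products of a 3-cycle and a disjoint transposition (class 32), ψ = −1 on 4-cycles (class 41), and ψ = 0 on 5-cycles (class 5). -/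
/-!
`η₅(π)` maps the block `e_i ⊗ ℝ³` to the block `e_{π i} ⊗ ℝ³`, so only the blocks with
`π i = i` contribute to the trace, each with the character `χ₄(π_i) = sign(π_i) · #Fix(φ(π_i))`
of `η₄`. For a fixed point `i` the induced permutation `π_i` has the cycle type of `π`, hence
`ψ(π) = #Fix(π) · χ₄(σ)` for any `σ ∈ S₄` of that cycle type; `χ₄` takes the values
`3, -1, 3, 0, -1` on the classes `1⁴, 21², 2², 31, 4`.
-/

open Equiv

/-- The character `ψ` of the canonical representation `η₅`. -/
noncomputable def psi (π : Equiv.Perm (Fin 5)) : ℝ :=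
  LinearMap.trace ℝ (Fin 5 → Fin 3 → ℝ) (eta5lin π)

open Finset

theorem LinearMap.trace_pi_pi_eq_sum {R ι κ : Type*} [CommRing R] [Fintype ι] [Fintype κ]
    [DecidableEq ι] [DecidableEq κ] (f : (ι → κ → R) →ₗ[R] (ι → κ → R)) :
    LinearMap.trace R _ f = ∑ i, ∑ j, f (Pi.single i (Pi.single j 1)) i j := by
  rw [LinearMap.trace_eq_matrix_trace R (Pi.basis fun _ : ι => Pi.basisFun R κ), Matrix.trace,
    sum_sigma', ← univ_sigma_univ]
  refine sum_congr rfl fun ⟨i, j⟩ _ => ?_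
  simp [LinearMap.toMatrix_apply]

theorem Equiv.Perm.extendDomain_inducedPerm {k : ℕ} (π : Perm (Fin (k + 1))) (i : Fin (k + 1))
    (hi : π i = i) : (inducedPerm π i).extendDomain (finSuccAboveEquiv i) = π := by
  ext x
  rcases eq_or_ne x i with rfl | hx
  · rw [extendDomain_apply_not_subtype _ _ (by simp), hi]
  · obtain ⟨y, rfl⟩ := Fin.exists_succAbove_eq hx
    have himage := extendDomain_apply_image (inducedPerm π i) (finSuccAboveEquiv i) y
    simp only [finSuccAboveEquiv_apply] at himage
    rw [himage]
    simp only [inducedPerm, restrictPerm, Equiv.trans_apply, Equiv.coe_fn_mk]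
    set w := (finSuccAboveEquiv (π i)).symm _
    have hw : (π i).succAbove w = π (i.succAbove y) :=
      congrArg Subtype.val ((finSuccAboveEquiv (π i)).apply_symm_apply _)
    rw [hi] at hw
    rw [hw]

theorem Equiv.Perm.cycleType_inducedPerm {k : ℕ} (π : Perm (Fin (k + 1))) (i : Fin (k + 1))
    (hi : π i = i) : (inducedPerm π i).cycleType = π.cycleType := by
  rw [← cycleType_extendDomain (finSuccAboveEquiv i), extendDomain_inducedPerm π i hi]

def eta4Char (σ : Perm (Fin 4)) : ℤ :=
  Perm.sign σ * #{j | phi σ j = j}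

theorem eta4Char_values (σ : Perm (Fin 4)) :
    (σ.cycleType = 0 → eta4Char σ = 3) ∧
    (σ.cycleType = {2} → eta4Char σ = -1) ∧
    (σ.cycleType = {2, 2} → eta4Char σ = 3) ∧
    (σ.cycleType = {3} → eta4Char σ = 0) ∧
    (σ.cycleType = {4} → eta4Char σ = -1) := by
  revert σ; decide

theorem sum_eta5lin_single_apply (π : Perm (Fin 5)) (i : Fin 5) :
    ∑ j, eta5lin π (Pi.single i (Pi.single j 1)) i j =
      if π i = i then (eta4Char (inducedPerm π i) : ℝ) else 0 := by
  simp only [eta5lin, LinearMap.coe_mk, AddHom.coe_mk, eta5fun, eta4fun]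
  split_ifs with hi
  · have hi' : π⁻¹ i = i := by rw [Perm.inv_eq_iff_eq, hi]
    simp only [hi', Pi.single_eq_same, eta4Char, ← mul_sum]
    push_cast
    congr 1
    rw [natCast_card_filter]
    refine sum_congr rfl fun j _ => ?_
    simp only [Pi.single_apply, Perm.inv_def, Equiv.eq_symm_apply, eq_comm]
  · have hi' : π⁻¹ i ≠ i := by rwa [Ne, Perm.inv_eq_iff_eq, eq_comm]
    simp only [Pi.single_eq_of_ne hi', Pi.zero_apply, mul_zero, sum_const_zero]

theorem psi_eq_sum_eta4Char (π : Perm (Fin 5)) :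
    psi π = ∑ i with π i = i, (eta4Char (inducedPerm π i) : ℝ) := by
  rw [psi, LinearMap.trace_pi_pi_eq_sum, sum_filter]
  exact sum_congr rfl fun i _ => sum_eta5lin_single_apply π i

theorem psi_eq_of_eta4Char (π : Perm (Fin 5)) (c : ℤ)
    (hc : ∀ σ : Perm (Fin 4), σ.cycleType = π.cycleType → eta4Char σ = c) :
    psi π = ((5 - π.cycleType.sum : ℕ) : ℝ) * c := by
  have hfix : #{i | π i = i} = 5 - π.cycleType.sum := by
    have hcompl : #π.supportᶜ = 5 - #π.support := by rw [card_compl, Fintype.card_fin]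
    rw [Perm.sum_cycleType, ← hcompl]
    congr 1; ext; simp
  rw [psi_eq_sum_eta4Char, ← hfix, ← nsmul_eq_mul, ← sum_const]
  refine sum_congr rfl fun i hi => ?_
  rw [hc _ (Perm.cycleType_inducedPerm π i (mem_filter.1 hi).2)]

theorem psi_eq_zero_of_sum_cycleType_eq_five (π : Perm (Fin 5)) (h : π.cycleType.sum = 5) :
    psi π = 0 := by
  simpa [h] using psi_eq_of_eta4Char π 0 fun σ hσ =>
    absurd σ.sum_cycleType_le (by simp [hσ, h])

/-- The values of the character `ψ = Tr ∘ η₅` on the conjugacy classes of `S₅`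
(conjugacy classes are identified by cycle types). -/
theorem psi_values (π : Equiv.Perm (Fin 5)) :
    (π = 1 → psi π = 15) ∧
    (π.cycleType = {2} → psi π = -3) ∧
    (π.cycleType = {2, 2} → psi π = 3) ∧
    (π.cycleType = {3} → psi π = 0) ∧
    (π.cycleType = {2, 3} → psi π = 0) ∧
    (π.cycleType = {4} → psi π = -1) ∧
    (π.cycleType = {5} → psi π = 0) := by
  refine ⟨fun h => ?_, fun h => ?_, fun h => ?_, fun h => ?_, fun h => ?_, fun h => ?_,
    fun h => ?_⟩
  · rw [psi_eq_of_eta4Char π 3 fun σ hσ => (eta4Char_values σ).1 (by simp [hσ, h]), h]; norm_num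
  · rw [psi_eq_of_eta4Char π (-1) fun σ hσ => (eta4Char_values σ).2.1 (hσ.trans h), h]; norm_num
  · rw [psi_eq_of_eta4Char π 3 fun σ hσ => (eta4Char_values σ).2.2.1 (hσ.trans h), h]; norm_num
  · rw [psi_eq_of_eta4Char π 0 fun σ hσ => (eta4Char_values σ).2.2.2.1 (hσ.trans h)]; simp
  · exact psi_eq_zero_of_sum_cycleType_eq_five π (by simp [h])
  · rw [psi_eq_of_eta4Char π (-1) fun σ hσ => (eta4Char_values σ).2.2.2.2 (hσ.trans h), h]
    norm_num
  · exact psi_eq_zero_of_sum_cycleType_eq_five π (by simp [h])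
end

section
/- Let w ∈ V^5 be the 5×3 matrix whose i-th row is (1,1,1) for i = 1,3,5 and (−1,−1,−1) for i = 2,4 (i.e. w = e_1 − e_2 + e_3 − e_4 + e_5, where e_i has i-th row (1,1,1) and zero remaining rows). Then η_5(π)(w) = sign(π) · w for every π ∈ S_5; in particular the line spanned by w is an η_5-invariant subspace, orthogonal to L_5, on which η_5 acts by the sign representation of S_5. -/
open Equiv

/-- The vector `w = e₁ − e₂ + e₃ − e₄ + e₅ ∈ V⁵`, whose `i`-th row is `(1,1,1)` for odd
`i` and `(−1,−1,−1)` for even `i` (in the paper's 1-based indexing). -/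
def wvec : Fin 5 → Fin 3 → ℝ := fun i _ => (-1 : ℝ) ^ (i : ℕ)

/-! Every row of `w` is constant, so the `φ`-part of `η₄` acts trivially on it and
`η₅(π) w` has row `sign(π_i) (-1)^i` at position `π i`. Conjugating `π` by the cycles
`(0 1 … i)` and `(0 1 … π i)` gives a permutation fixing `0` that is `π_i` on the rest,
whence `sign(π_i) = sign(π) (-1)^(i + π i)` and `η₅(π) w = sign(π) w`. -/

namespace Equiv.Perm

theorem apply_succAbove_eq_succAbove_inducedPerm {k : ℕ} (π : Perm (Fin (k + 1)))
    (i : Fin (k + 1)) (j : Fin k) :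
    π (i.succAbove j) = (π i).succAbove (inducedPerm π i j) :=
  congrArg Subtype.val ((finSuccAboveEquiv (π i)).apply_symm_apply
    (restrictPerm π i (finSuccAboveEquiv i j))).symm

theorem cycleRange_mul_mul_cycleRange_inv {k : ℕ} (π : Perm (Fin (k + 1))) (i : Fin (k + 1)) :
    Fin.cycleRange (π i) * π * (Fin.cycleRange i)⁻¹ =
      decomposeFin.symm (0, inducedPerm π i) := by
  ext x : 1
  refine Fin.cases ?_ (fun j => ?_) x
  · have hi : (Fin.cycleRange i)⁻¹ 0 = i := by
      rw [inv_eq_iff_eq, Fin.cycleRange_self]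
    rw [mul_apply, mul_apply, hi, Fin.cycleRange_self, decomposeFin_symm_apply_zero]
  · have hj : (Fin.cycleRange i)⁻¹ j.succ = i.succAbove j := by
      rw [inv_eq_iff_eq, Fin.cycleRange_succAbove]
    rw [mul_apply, mul_apply, hj, apply_succAbove_eq_succAbove_inducedPerm,
      Fin.cycleRange_succAbove, decomposeFin_symm_apply_succ, swap_self, refl_apply]

theorem sign_inducedPerm {k : ℕ} (π : Perm (Fin (k + 1))) (i : Fin (k + 1)) :
    sign (inducedPerm π i) * (-1) ^ (i : ℕ) = sign π * (-1) ^ (π i : ℕ) := by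
  have h := congrArg sign (cycleRange_mul_mul_cycleRange_inv π i)
  simp only [map_mul, map_inv, Fin.sign_cycleRange, decomposeFin.symm_sign, if_true,
    one_mul] at h
  rw [← h, Int.units_inv_eq_self, mul_assoc, ← sq, Int.units_sq, mul_one, mul_comm]

end Equiv.Perm

theorem eta4fun_const (σ : Perm (Fin 4)) (c : ℝ) :
    eta4fun σ (fun _ => c) = fun _ => ((Perm.sign σ : ℤ) : ℝ) * c :=
  rfl

theorem eta5fun_wvec (π : Perm (Fin 5)) :
    eta5fun π wvec = fun i j => ((Perm.sign π : ℤ) : ℝ) * wvec i j := by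
  funext i j
  have h := congrArg (fun u : ℤˣ => ((u : ℤ) : ℝ)) (Perm.sign_inducedPerm π (π⁻¹ i))
  simp only [Perm.coe_inv, apply_symm_apply, Units.val_mul, Units.val_pow_eq_pow_val,
    Units.val_neg, Units.val_one, Int.cast_mul, Int.cast_pow, Int.cast_neg, Int.cast_one] at h
  change eta4fun _ (fun _ => (-1 : ℝ) ^ (π⁻¹ i : ℕ)) j = _
  rw [eta4fun_const]
  exact h

theorem wvec_inner_eq_zero_of_mem_L5set {v : Fin 5 → Fin 3 → ℝ} (hv : v ∈ L5set) :
    ∑ i, ∑ j, wvec i j * v i j = 0 := by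
  refine Finset.sum_eq_zero fun i _ => ?_
  simp only [wvec, ← Finset.mul_sum, Fin.sum_univ_three, hv i, mul_zero]

theorem eta5fun_mem_span_wvec (π : Perm (Fin 5)) {v : Fin 5 → Fin 3 → ℝ}
    (hv : v ∈ Submodule.span ℝ {wvec}) : eta5fun π v ∈ Submodule.span ℝ {wvec} := by
  obtain ⟨c, rfl⟩ := Submodule.mem_span_singleton.mp hv
  refine Submodule.mem_span_singleton.mpr ⟨c * ((Perm.sign π : ℤ) : ℝ), ?_⟩
  have hsmul : eta5fun π (c • wvec) = c • eta5fun π wvec := (eta5lin π).map_smul c wvec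
  rw [hsmul, eta5fun_wvec, mul_smul]
  rfl

/-- `η₅(π)(w) = sign(π)·w` for every `π ∈ S₅`; in particular the line spanned by `w` is an
`η₅`-invariant subspace, orthogonal to `L₅`, on which `η₅` acts by the sign representation. -/
theorem wvec_sign_representation :
    (∀ π : Equiv.Perm (Fin 5),
      eta5fun π wvec = fun i j => ((Equiv.Perm.sign π : ℤ) : ℝ) * wvec i j) ∧
    (∀ v ∈ L5set, ∑ i, ∑ j, wvec i j * v i j = 0) ∧
    (∀ π : Equiv.Perm (Fin 5), ∀ v ∈ Submodule.span ℝ ({wvec} : Set (Fin 5 → Fin 3 → ℝ)),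
      eta5fun π v ∈ Submodule.span ℝ ({wvec} : Set (Fin 5 → Fin 3 → ℝ))) :=
  ⟨eta5fun_wvec, fun _ hv => wvec_inner_eq_zero_of_mem_L5set hv,
    fun π _ hv => eta5fun_mem_span_wvec π hv⟩
end

section
/- For every edge λ = {p, q} ⊂ {1,2,3,4,5}, the transposition π_λ ∈ S_5 exchanging p and q satisfies π_λ · r_λ = − r_λ, where the action on functionals is (π·f)(x) = f(η_5(π)^{-1} x). -/
open Equiv

/-- Coefficient matrices of the ten characteristic functionals `r_λ`, `λ` an edge of
`{1,…,5}` (0-indexed: rows `1,…,5` become `0,…,4`, columns `(a,b,c)` become `(0,1,2)`).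
`rc p q` is the coefficient matrix of `r_{(p+1)(q+1)}` for `p < q`, and `0` otherwise. -/
def rc : Fin 5 → Fin 5 → Fin 5 → Fin 3 → ℝ :=
  -- r₁₂ = −a₃+a₄−a₅, r₁₃ = −a₂−b₄+b₅, r₁₄ = b₂−b₃−c₅, r₁₅ = −c₂+c₃−c₄,
  -- r₂₃ = −a₁+c₄−c₅, r₂₄ = b₁+c₃+b₅, r₂₅ = −c₁−b₃+b₄,
  -- r₃₄ = −c₁+c₂−a₅, r₃₅ = b₁−b₂−a₄, r₄₅ = −a₁+a₂−a₃
  ![![0,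
     ![![0,0,0], ![0,0,0], ![-1,0,0], ![1,0,0], ![-1,0,0]],
     ![![0,0,0], ![-1,0,0], ![0,0,0], ![0,-1,0], ![0,1,0]],
     ![![0,0,0], ![0,1,0], ![0,-1,0], ![0,0,0], ![0,0,-1]],
     ![![0,0,0], ![0,0,-1], ![0,0,1], ![0,0,-1], ![0,0,0]]],
    ![0, 0,
     ![![-1,0,0], ![0,0,0], ![0,0,0], ![0,0,1], ![0,0,-1]],
     ![![0,1,0], ![0,0,0], ![0,0,1], ![0,0,0], ![0,1,0]],
     ![![0,0,-1], ![0,0,0], ![0,-1,0], ![0,1,0], ![0,0,0]]],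
    ![0, 0, 0,
     ![![0,0,-1], ![0,0,1], ![0,0,0], ![0,0,0], ![-1,0,0]],
     ![![0,1,0], ![0,-1,0], ![0,0,0], ![-1,0,0], ![0,0,0]]],
    ![0, 0, 0, 0,
     ![![-1,0,0], ![1,0,0], ![-1,0,0], ![0,0,0], ![0,0,0]]],
    ![0, 0, 0, 0, 0]]

/-- The characteristic functional `r_λ : V⁵ → ℝ` for the edge `λ = {p,q}`, `p < q`. -/
def rfun (p q : Fin 5) (v : Fin 5 → Fin 3 → ℝ) : ℝ :=
  ∑ i, ∑ j, rc p q i j * v i j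

/-- The action of `S₅` on functions `f : V⁵ → ℝ` induced by `η₅`:
`(π·f)(x) = f(η₅(π)⁻¹ x)`. -/
noncomputable def permAct (π : Equiv.Perm (Fin 5)) (f : (Fin 5 → Fin 3 → ℝ) → ℝ) :
    (Fin 5 → Fin 3 → ℝ) → ℝ :=
  fun v => f (eta5fun π⁻¹ v)

/-!
Writing a linear form on `V⁵` as `x ↦ ∑ c i j * x i j`, precomposing it with `η₅(σ)` replaces
its coefficient matrix `c` by the transpose `η₅(σ)ᵀ c`, because `η₅(σ)` is a signed permutation
of the matrix entries. The theorem thus becomes the identity `η₅(π_λ)ᵀ r_λ = -r_λ` between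
coefficient matrices, which has integer entries and is checked by evaluation.
-/

/-- The coefficient matrices `rc` over `ℤ`, where identities between them are decidable. -/
def rcInt : Fin 5 → Fin 5 → Fin 5 → Fin 3 → ℤ :=
  ![![0,
     ![![0,0,0], ![0,0,0], ![-1,0,0], ![1,0,0], ![-1,0,0]],
     ![![0,0,0], ![-1,0,0], ![0,0,0], ![0,-1,0], ![0,1,0]],
     ![![0,0,0], ![0,1,0], ![0,-1,0], ![0,0,0], ![0,0,-1]],
     ![![0,0,0], ![0,0,-1], ![0,0,1], ![0,0,-1], ![0,0,0]]],
    ![0, 0,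
     ![![-1,0,0], ![0,0,0], ![0,0,0], ![0,0,1], ![0,0,-1]],
     ![![0,1,0], ![0,0,0], ![0,0,1], ![0,0,0], ![0,1,0]],
     ![![0,0,-1], ![0,0,0], ![0,-1,0], ![0,1,0], ![0,0,0]]],
    ![0, 0, 0,
     ![![0,0,-1], ![0,0,1], ![0,0,0], ![0,0,0], ![-1,0,0]],
     ![![0,1,0], ![0,-1,0], ![0,0,0], ![-1,0,0], ![0,0,0]]],
    ![0, 0, 0, 0,
     ![![-1,0,0], ![1,0,0], ![-1,0,0], ![0,0,0], ![0,0,0]]],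
    ![0, 0, 0, 0, 0]]

lemma rc_eq_intCast : rc = fun p q i j => (rcInt p q i j : ℝ) := by
  simp [rc, rcInt, funext_iff, Fin.forall_fin_succ]

def eta5Transpose {R : Type*} [Ring R] (σ : Perm (Fin 5)) (c : Fin 5 → Fin 3 → R) :
    Fin 5 → Fin 3 → R :=
  fun i j => ((Perm.sign (inducedPerm σ i) : ℤ) : R) * c (σ i) (phi (inducedPerm σ i) j)

lemma eta5Transpose_intCast {R : Type*} [Ring R] (σ : Perm (Fin 5)) (c : Fin 5 → Fin 3 → ℤ) :
    eta5Transpose σ (fun i j => (c i j : R)) = fun i j => ((eta5Transpose σ c i j : ℤ) : R) := by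
  funext i j
  simp [eta5Transpose]

lemma sum_mul_eta5fun (σ : Perm (Fin 5)) (c v : Fin 5 → Fin 3 → ℝ) :
    ∑ i, ∑ j, c i j * eta5fun σ v i j = ∑ i, ∑ j, eta5Transpose σ c i j * v i j := by
  rw [← Equiv.sum_comp σ]
  refine Finset.sum_congr rfl fun i _ => ?_
  rw [← Equiv.sum_comp (phi (inducedPerm σ i))]
  refine Finset.sum_congr rfl fun j _ => ?_
  simp only [eta5fun, eta4fun, Perm.coe_inv, symm_apply_apply, eta5Transpose]
  ring

lemma eta5Transpose_swap_rcInt :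
    ∀ p q : Fin 5, p < q → eta5Transpose (swap p q) (rcInt p q) = -rcInt p q := by
  decide

lemma eta5Transpose_swap_rc {p q : Fin 5} (h : p < q) :
    eta5Transpose (swap p q) (rc p q) = -rc p q := by
  rw [rc_eq_intCast, eta5Transpose_intCast, eta5Transpose_swap_rcInt p q h]
  funext i j
  simp

/-- For every edge `λ = {p,q}`, the transposition `π_λ` exchanging the vertices of `λ`
changes the sign of the characteristic functional: `π_λ · r_λ = −r_λ`. -/
theorem transposition_negates_characteristic (p q : Fin 5) (h : p < q) :
    permAct (Equiv.swap p q) (rfun p q) = fun v => -(rfun p q v) := by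
  funext v
  simp only [permAct, rfun, swap_inv, sum_mul_eta5fun, eta5Transpose_swap_rc h]
  simp
end
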